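/- arXiv:math/0310433 — 2 statements merged into one kernel-verified Lean document; each statement's English description precedes it below -/
import Mathlib

section
/- Let $I \subseteq \mathbb{R}$ be a non-empty open interval. There is no dimension function $f$ such that $0 < \mathcal{H}^f(\mathcal{L} \cap I) < +\infty$, where $\mathcal{L}$ is the set of Liouville numbers. -/
open MeasureTheory

open Set in
/-- Translation invariance of `mkMetric` measures on `ℝ`. -/
lemma mkMetric_image_add_aux (f : ENNReal → ENNReal) (t : ℝ) (s : Set ℝ) :
    Measure.mkMetric (X := ℝ) f ((fun x => x + t) '' s) = Measure.mkMetric f s := by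
  have h1 := MeasureTheory.OuterMeasure.isometryEquiv_comap_mkMetric (X := ℝ) (Y := ℝ) f
    (IsometryEquiv.addRight t)
  have h2 : (OuterMeasure.comap (IsometryEquiv.addRight t) (OuterMeasure.mkMetric f)) s
      = (OuterMeasure.mkMetric (X := ℝ) f) s := by rw [h1]
  rw [OuterMeasure.comap_apply] at h2
  have himg : (IsometryEquiv.addRight t) '' s = (fun x => x + t) '' s := by
    rfl
  rw [himg] at h2
  calc Measure.mkMetric (X := ℝ) f ((fun x => x + t) '' s)
      = (OuterMeasure.mkMetric (X := ℝ) f) ((fun x => x + t) '' s) := by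
        rw [OuterMeasure.coe_mkMetric]
    _ = (OuterMeasure.mkMetric (X := ℝ) f) s := h2
    _ = Measure.mkMetric (X := ℝ) f s := by rw [OuterMeasure.coe_mkMetric]

/-- Singletons are null for `mkMetric f` when `f 0 = 0`. -/
lemma mkMetric_singleton_aux (f : ENNReal → ENNReal) (hf0 : f 0 = 0) (x : ℝ) :
    Measure.mkMetric (X := ℝ) f {x} = 0 := by
  refine le_antisymm ?_ zero_le
  rw [Measure.mkMetric_apply]
  refine iSup_le fun r => iSup_le fun hr => ?_
  refine iInf_le_of_le (fun _ => {x}) ?_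
  refine iInf_le_of_le (by simp [Set.subset_iUnion (fun _ : ℕ => ({x} : Set ℝ)) 0]) ?_
  refine iInf_le_of_le (fun n => by simp) ?_
  simp [hf0]

lemma liouville_add_rat_iff_aux (t : ℚ) (x : ℝ) : Liouville (x + t) ↔ Liouville x := by
  rw [← forall_liouvilleWith_iff, ← forall_liouvilleWith_iff]
  exact forall_congr' fun p => LiouvilleWith.add_rat_iff

open Set in
lemma liouville_image_add_aux (t : ℚ) (u v : ℝ) :
    (fun x : ℝ => x + (t : ℝ)) '' ({x | Liouville x} ∩ Ioc u v)
      = {x | Liouville x} ∩ Ioc (u + t) (v + t) := by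
  ext y
  constructor
  · rintro ⟨x, ⟨hL, hx1, hx2⟩, rfl⟩
    refine ⟨(liouville_add_rat_iff_aux t x).2 hL, ?_⟩
    simp only [Set.mem_Ioc]
    exact ⟨by linarith, by linarith⟩
  · rintro ⟨hL, h1, h2⟩
    refine ⟨y - t, ⟨?_, Set.mem_Ioc.mpr ⟨by linarith, by linarith⟩⟩, by ring⟩
    have : Liouville ((y - t) + t) := by simpa using hL
    exact (liouville_add_rat_iff_aux t (y - t)).1 this

/-- Generic: replacing `Ioo` by `Ioc` does not change the measure of an intersection,
for measures vanishing on singletons. -/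
lemma inter_Ioo_Ioc_aux {m : Measure ℝ} (hm : ∀ x : ℝ, m {x} = 0) (A : Set ℝ) (u v : ℝ) :
    m (A ∩ Set.Ioo u v) = m (A ∩ Set.Ioc u v) := by
  refine le_antisymm
    (measure_mono (Set.inter_subset_inter_right _ Set.Ioo_subset_Ioc_self)) ?_
  have h1 : m (A ∩ Set.Ioc u v) ≤ m ((A ∩ Set.Ioo u v) ∪ {v}) := by
    refine measure_mono ?_
    rintro x ⟨hA, hx1, hx2⟩
    rcases eq_or_lt_of_le hx2 with h | h
    · exact Or.inr (by simp [h])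
    · exact Or.inl ⟨hA, hx1, h⟩
  have h2 : m ((A ∩ Set.Ioo u v) ∪ {v}) ≤ m (A ∩ Set.Ioo u v) + m {v} := measure_union_le _ _
  have h3 := hm v
  calc m (A ∩ Set.Ioc u v) ≤ m (A ∩ Set.Ioo u v) + m {v} := h1.trans h2
    _ = m (A ∩ Set.Ioo u v) := by rw [h3, add_zero]

set_option maxHeartbeats 1000000 in
theorem stmt_7 (a b : ℝ) (hab : a < b) :
    ¬ ∃ f : ENNReal → ENNReal, Monotone f ∧ Continuous f ∧ f 0 = 0 ∧
      0 < Measure.mkMetric f ({x : ℝ | Liouville x} ∩ Set.Ioo a b) ∧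
      Measure.mkMetric f ({x : ℝ | Liouville x} ∩ Set.Ioo a b) < ⊤ := by
  rintro ⟨f, hmono, hcont, hf0, hpos, hfin⟩
  classical
  set L : Set ℝ := {x : ℝ | Liouville x} with hLdef
  set μ : Measure ℝ := Measure.mkMetric f with hμdef
  have hsing : ∀ x : ℝ, μ {x} = 0 := mkMetric_singleton_aux f hf0
  have hinv : ∀ (t : ℝ) (s : Set ℝ), μ ((fun x => x + t) '' s) = μ s :=
    fun t s => mkMetric_image_add_aux f t s
  -- Step 1: find rationals a < p < q < b with positive measure of L ∩ Ioc p q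
  set T : ℚ × ℚ → Set ℝ := fun pq =>
    if a < (pq.1 : ℝ) ∧ (pq.2 : ℝ) < b then L ∩ Set.Ioc (pq.1 : ℝ) (pq.2 : ℝ) else ∅ with hTdef
  have hcov : L ∩ Set.Ioo a b ⊆ ⋃ pq, T pq := by
    rintro x ⟨hL, hx1, hx2⟩
    obtain ⟨p, hp1, hp2⟩ := exists_rat_btwn hx1
    obtain ⟨q, hq1, hq2⟩ := exists_rat_btwn hx2
    refine Set.mem_iUnion.2 ⟨(p, q), ?_⟩
    rw [hTdef]
    simp only [if_pos (show a < ((p, q).1 : ℝ) ∧ ((p, q).2 : ℝ) < b from ⟨hp1, hq2⟩)]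
    exact ⟨hL, hp2, le_of_lt hq1⟩
  have hex : ∃ pq : ℚ × ℚ, μ (T pq) ≠ 0 := by
    by_contra h
    push_neg at h
    have h0 : μ (L ∩ Set.Ioo a b) = 0 :=
      le_antisymm ((measure_mono hcov).trans (measure_iUnion_null h).le) zero_le
    exact hpos.ne' h0
  obtain ⟨⟨p, q⟩, hTpq⟩ := hex
  have hcond : a < (p : ℝ) ∧ (q : ℝ) < b := by
    by_contra h
    rw [hTdef] at hTpq
    simp only [if_neg h] at hTpq
    exact hTpq measure_empty
  have hc0 : μ (L ∩ Set.Ioc (p : ℝ) q) ≠ 0 := by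
    rw [hTdef] at hTpq
    simpa only [if_pos hcond] using hTpq
  have hpq : (p : ℝ) < q := by
    by_contra h
    push_neg at h
    rw [Set.Ioc_eq_empty (not_lt.mpr h), Set.inter_empty] at hc0
    exact hc0 measure_empty
  have hpqQ : p < q := by exact_mod_cast hpq
  have hcfin : μ (L ∩ Set.Ioc (p : ℝ) q) < ⊤ := by
    refine lt_of_le_of_lt (measure_mono ?_) hfin
    rintro x ⟨hL, hx1, hx2⟩
    exact ⟨hL, lt_trans hcond.1 hx1, lt_of_le_of_lt hx2 hcond.2⟩
  set c : ENNReal := μ (L ∩ Set.Ioc (p : ℝ) q) with hcdef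
  set ℓ : ℚ := q - p with hℓdef
  have hℓpos : 0 < ℓ := by rw [hℓdef]; exact sub_pos.mpr hpqQ
  -- The function g
  set g : ℚ → ENNReal := fun r => μ (L ∩ Set.Ioc (p : ℝ) ((p : ℝ) + r)) with hgdef
  have hgℓ : g ℓ = c := by
    have he : (p : ℝ) + ((ℓ : ℚ) : ℝ) = (q : ℝ) := by rw [hℓdef]; push_cast; ring
    show μ (L ∩ Set.Ioc (p : ℝ) ((p : ℝ) + ((ℓ : ℚ) : ℝ))) = c
    rw [he, hcdef]
  -- translation: measure of L ∩ Ioc with rationally-shifted endpoints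
  have htrans : ∀ (u v : ℚ), μ (L ∩ Set.Ioc (u : ℝ) (v : ℝ)) = g (v - u) := by
    intro u v
    have h2 : (fun x : ℝ => x + ((u : ℝ) - (p : ℝ))) ''
        ({x : ℝ | Liouville x} ∩ Set.Ioc (p : ℝ) ((p : ℝ) + ((v - u : ℚ) : ℝ)))
        = {x : ℝ | Liouville x} ∩ Set.Ioc (u : ℝ) (v : ℝ) := by
      have e0 : ((u - p : ℚ) : ℝ) = (u : ℝ) - (p : ℝ) := by push_cast; ring
      have h3 := liouville_image_add_aux (u - p) (p : ℝ) ((p : ℝ) + ((v - u : ℚ) : ℝ))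
      rw [e0] at h3
      have e1 : (p : ℝ) + ((u : ℝ) - (p : ℝ)) = (u : ℝ) := by ring
      have e2 : (p : ℝ) + ((v - u : ℚ) : ℝ) + ((u : ℝ) - (p : ℝ)) = (v : ℝ) := by
        push_cast; ring
      rw [e1, e2] at h3
      exact h3
    rw [← hLdef] at h2
    show μ (L ∩ Set.Ioc (u : ℝ) (v : ℝ))
        = μ (L ∩ Set.Ioc (p : ℝ) ((p : ℝ) + ((v - u : ℚ) : ℝ)))
    rw [← hinv ((u : ℝ) - (p : ℝ)) (L ∩ Set.Ioc (p : ℝ) ((p : ℝ) + ((v - u : ℚ) : ℝ))), h2]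
  -- additivity of g
  have hadd : ∀ r s : ℚ, 0 ≤ r → 0 ≤ s → g (r + s) = g r + g s := by
    intro r s hr hs
    have hrR : (0 : ℝ) ≤ (r : ℝ) := by exact_mod_cast hr
    have hsR : (0 : ℝ) ≤ (s : ℝ) := by exact_mod_cast hs
    have key := measure_inter_add_diff (μ := μ)
      (L ∩ Set.Ioc (p : ℝ) ((p : ℝ) + ((r + s : ℚ) : ℝ)))
      (measurableSet_Ioc (a := (p : ℝ)) (b := (p : ℝ) + (r : ℝ)))
    have e1 : (L ∩ Set.Ioc (p : ℝ) ((p : ℝ) + ((r + s : ℚ) : ℝ))) ∩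
        Set.Ioc (p : ℝ) ((p : ℝ) + (r : ℝ)) = L ∩ Set.Ioc (p : ℝ) ((p : ℝ) + (r : ℝ)) := by
      rw [Set.inter_assoc, Set.Ioc_inter_Ioc, sup_idem,
        inf_eq_right.mpr (show (p : ℝ) + (r : ℝ) ≤ (p : ℝ) + ((r + s : ℚ) : ℝ) by
          push_cast; linarith)]
    have e2 : (L ∩ Set.Ioc (p : ℝ) ((p : ℝ) + ((r + s : ℚ) : ℝ))) \
        Set.Ioc (p : ℝ) ((p : ℝ) + (r : ℝ))
        = L ∩ Set.Ioc ((p : ℝ) + (r : ℝ)) ((p : ℝ) + (r : ℝ) + (s : ℝ)) := by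
      rw [Set.inter_diff_assoc]
      congr 1
      ext x
      simp only [Set.mem_diff, Set.mem_Ioc, not_and, not_le]
      constructor
      · rintro ⟨⟨h1, h2⟩, h3⟩
        push_cast at h2
        exact ⟨h3 h1, by linarith⟩
      · rintro ⟨h1, h2⟩
        refine ⟨⟨by linarith, ?_⟩, fun _ => h1⟩
        push_cast
        linarith
    rw [e1, e2] at key
    have e3 : μ (L ∩ Set.Ioc ((p : ℝ) + (r : ℝ)) ((p : ℝ) + (r : ℝ) + (s : ℝ))) = g s := by
      have h45 := htrans (p + r) (p + r + s)
      have harg : (p + r + s) - (p + r) = s := by ring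
      rw [harg] at h45
      have h4 : ((p + r : ℚ) : ℝ) = (p : ℝ) + r := by push_cast; ring
      have h5 : ((p + r + s : ℚ) : ℝ) = (p : ℝ) + r + s := by push_cast; ring
      rw [h4, h5] at h45
      exact h45
    rw [e3] at key
    show μ (L ∩ Set.Ioc (p : ℝ) ((p : ℝ) + ((r + s : ℚ) : ℝ)))
        = μ (L ∩ Set.Ioc (p : ℝ) ((p : ℝ) + (r : ℝ))) + g s
    exact key.symm
  have hg0 : g 0 = 0 := by
    show μ (L ∩ Set.Ioc (p : ℝ) ((p : ℝ) + ((0 : ℚ) : ℝ))) = 0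
    rw [Rat.cast_zero, add_zero, Set.Ioc_self, Set.inter_empty]
    exact measure_empty
  have hmul : ∀ (k : ℕ) (s : ℚ), 0 ≤ s → g (k * s) = k * g s := by
    intro k
    induction k with
    | zero => intro s hs; simpa using hg0
    | succ n ih =>
      intro s hs
      have : ((n : ℚ) + 1) * s = (n : ℚ) * s + s := by ring
      push_cast
      rw [this, hadd _ _ (by positivity) hs, ih s hs]
      push_cast
      ring
  -- main identity
  have hmain : ∀ r : ℚ, g r = ENNReal.ofReal (r : ℝ) * c / ENNReal.ofReal (ℓ : ℝ) := by
    intro r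
    rcases le_or_gt r 0 with hr | hr
    · have hrR : (r : ℝ) ≤ 0 := by exact_mod_cast hr
      have : g r = 0 := by
        show μ (L ∩ Set.Ioc (p : ℝ) ((p : ℝ) + (r : ℝ))) = 0
        rw [Set.Ioc_eq_empty (by push_neg; linarith), Set.inter_empty]
        exact measure_empty
      rw [this, ENNReal.ofReal_of_nonpos hrR, zero_mul, ENNReal.zero_div]
    · -- find m n with n * r = m * ℓ
      set t : ℚ := r / ℓ with htdef
      have ht : 0 ≤ t := div_nonneg hr.le hℓpos.le
      have hden : ((t.den : ℚ)) ≠ 0 := by exact_mod_cast t.den_nz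
      have hnum : ((t.num.toNat : ℤ)) = t.num := Int.toNat_of_nonneg (Rat.num_nonneg.mpr ht)
      have hdt : (t.den : ℚ) * t = t.num := by
        rw [mul_comm]
        exact_mod_cast Rat.mul_den_eq_num t
      have hmn : (t.den : ℚ) * r = (t.num.toNat : ℚ) * ℓ := by
        have hr' : r = t * ℓ := by rw [htdef, div_mul_cancel₀ _ (ne_of_gt hℓpos)]
        rw [hr', ← mul_assoc, hdt]
        congr 1
        exact_mod_cast hnum.symm
      set m : ℕ := t.num.toNat
      set n : ℕ := t.den
      have hn0 : (n : ENNReal) ≠ 0 := by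
        simp only [ne_eq, Nat.cast_eq_zero]
        exact t.den_nz
      have hnT : (n : ENNReal) ≠ ⊤ := ENNReal.natCast_ne_top n
      have hℓ0 : ENNReal.ofReal (ℓ : ℝ) ≠ 0 := by
        rw [ne_eq, ENNReal.ofReal_eq_zero, not_le]
        exact_mod_cast hℓpos
      have hℓT : ENNReal.ofReal (ℓ : ℝ) ≠ ⊤ := ENNReal.ofReal_ne_top
      refine (ENNReal.eq_div_iff hℓ0 hℓT).2 ?_
      refine (ENNReal.mul_right_inj hn0 hnT).1 ?_
      have lhs : (n : ENNReal) * (ENNReal.ofReal (ℓ : ℝ) * g r)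
          = ENNReal.ofReal (ℓ : ℝ) * ((m : ENNReal) * c) := by
        rw [mul_left_comm, ← hmul n r hr.le,
          show ((n : ℚ) * r) = ((m : ℚ) * ℓ) from hmn, hmul m ℓ hℓpos.le, hgℓ]
      have hcast : (n : ENNReal) * ENNReal.ofReal (r : ℝ)
          = (m : ENNReal) * ENNReal.ofReal (ℓ : ℝ) := by
        rw [← ENNReal.ofReal_natCast n, ← ENNReal.ofReal_natCast m,
          ← ENNReal.ofReal_mul (by positivity), ← ENNReal.ofReal_mul (by positivity)]
        congr 1
        exact_mod_cast hmn
      calc (n : ENNReal) * (ENNReal.ofReal (ℓ : ℝ) * g r)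
          = ENNReal.ofReal (ℓ : ℝ) * ((m : ENNReal) * c) := lhs
        _ = (m : ENNReal) * ENNReal.ofReal (ℓ : ℝ) * c := by ring
        _ = (n : ENNReal) * ENNReal.ofReal (r : ℝ) * c := by rw [hcast]
        _ = (n : ENNReal) * (ENNReal.ofReal (r : ℝ) * c) := by ring
  -- the two measures
  set ρ : Measure ℝ := μ.restrict (L ∩ Set.Ioc (p : ℝ) q) with hρdef
  set σ : Measure ℝ := (c / ENNReal.ofReal (ℓ : ℝ)) • volume.restrict (Set.Ioc (p : ℝ) q)
    with hσdef
  haveI : IsFiniteMeasure ρ := ⟨by rw [hρdef, Measure.restrict_apply_univ]; exact hcfin⟩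
  have hℓ0 : ENNReal.ofReal (ℓ : ℝ) ≠ 0 := by
    rw [ne_eq, ENNReal.ofReal_eq_zero, not_le]
    exact_mod_cast hℓpos
  have hℓT : ENNReal.ofReal (ℓ : ℝ) ≠ ⊤ := ENNReal.ofReal_ne_top
  have hρσ : ρ = σ := by
    refine Real.measure_ext_Ioo_rat ?_
    intro l u
    have hsup : Set.Ioc ((p : ℝ) ⊔ (l : ℝ)) ((q : ℝ) ⊓ (u : ℝ))
        = Set.Ioc ((max p l : ℚ) : ℝ) ((min q u : ℚ) : ℝ) := by
      rw [Rat.cast_max, Rat.cast_min]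
    have hρval : ρ (Set.Ioo (l : ℝ) u) = g (min q u - max p l) := by
      rw [hρdef, Measure.restrict_apply measurableSet_Ioo, Set.inter_comm,
        inter_Ioo_Ioc_aux hsing (L ∩ Set.Ioc (p : ℝ) q) (l : ℝ) (u : ℝ),
        Set.inter_assoc, Set.Ioc_inter_Ioc, hsup, htrans (max p l) (min q u)]
    have hvol : volume (Set.Ioo (l : ℝ) u ∩ Set.Ioc (p : ℝ) q)
        = ENNReal.ofReal (((min q u : ℚ) : ℝ) - ((max p l : ℚ) : ℝ)) := by
      rw [Set.inter_comm,
        inter_Ioo_Ioc_aux (fun x => Real.volume_singleton) (Set.Ioc (p : ℝ) q) (l : ℝ) (u : ℝ),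
        Set.Ioc_inter_Ioc, hsup, Real.volume_Ioc]
    have hσval : σ (Set.Ioo (l : ℝ) u)
        = c / ENNReal.ofReal (ℓ : ℝ)
          * ENNReal.ofReal (((min q u : ℚ) : ℝ) - ((max p l : ℚ) : ℝ)) := by
      rw [hσdef, Measure.smul_apply, smul_eq_mul,
        Measure.restrict_apply measurableSet_Ioo, hvol]
    rw [hρval, hσval, hmain (min q u - max p l)]
    have : (((min q u - max p l : ℚ)) : ℝ) = ((min q u : ℚ) : ℝ) - ((max p l : ℚ) : ℝ) := by
      push_cast
      ring
    rw [this, div_eq_mul_inv, div_eq_mul_inv]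
    ring
  -- final contradiction
  have hS : ρ (L ∩ Set.Ioc (p : ℝ) q) = c := by
    rw [hρdef, Measure.restrict_apply_self]
  have hS2 : σ (L ∩ Set.Ioc (p : ℝ) q) = 0 := by
    rw [hσdef, Measure.smul_apply, smul_eq_mul]
    have h1 : volume.restrict (Set.Ioc (p : ℝ) q) (L ∩ Set.Ioc (p : ℝ) q)
        ≤ volume (L ∩ Set.Ioc (p : ℝ) q) := Measure.le_iff'.1 Measure.restrict_le_self _
    have h2 : volume (L ∩ Set.Ioc (p : ℝ) q) = 0 := by
      refine le_antisymm ((measure_mono Set.inter_subset_left).trans_eq ?_) zero_le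
      rw [hLdef]
      exact volume_setOf_liouville
    rw [le_antisymm (h1.trans_eq h2) zero_le, mul_zero]
  rw [hρσ, hS2] at hS
  exact hc0 hS.symm
end

section
/- Let $f$ be a dimension function such that there exists $\delta > 0$ with $\lim_{x \to 0^+} x^{-\delta} f(x) = 0$. Then the Hausdorff $f$-measure of the set of Liouville numbers is zero: $\mathcal{H}^f(\mathcal{L}) = 0$. -/
open MeasureTheory Filter
open Filter Set MeasureTheory
open scoped ENNReal NNReal Topology MeasureTheory

lemma liouville_large_den {x : ℝ} (hx : Liouville x) (n w : ℕ) :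
    ∃ a b : ℤ, (n : ℤ) < b ∧ 1 < b ∧ |x - a / b| < 1 / (b : ℝ) ^ w := by
  by_cases hn : n ≤ 1
  · obtain ⟨a, b, hb, -, hlt⟩ := hx w
    exact ⟨a, b, lt_of_le_of_lt (by exact_mod_cast hn) hb, hb, hlt⟩
  push_neg at hn
  have hne : (Finset.Icc (2:ℤ) n).Nonempty := ⟨2, by simp; exact_mod_cast hn⟩
  set d : ℝ := (Finset.Icc (2:ℤ) n).inf' hne fun b => |x * b - round (x * b)| / b with hd
  have hdpos : 0 < d := by
    rw [hd, Finset.lt_inf'_iff]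
    intro b hb
    simp only [Finset.mem_Icc] at hb
    have hb0 : (0:ℝ) < b := by exact_mod_cast lt_of_lt_of_le (by norm_num) hb.1
    apply div_pos _ hb0
    rw [abs_pos, sub_ne_zero]
    have : Irrational (x * b) := by
      rw [mul_comm]
      exact Irrational.intCast_mul hx.irrational (by exact_mod_cast hb0.ne')
    exact this.ne_int _
  obtain ⟨k, hk⟩ := exists_pow_lt_of_lt_one hdpos (by norm_num : (1:ℝ)/2 < 1)
  obtain ⟨a, b, hb, hxne, hlt⟩ := hx (k + w)
  refine ⟨a, b, ?_, hb, ?_⟩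
  · by_contra hble
    push_neg at hble
    have hbmem : b ∈ Finset.Icc (2:ℤ) n := Finset.mem_Icc.2 ⟨hb, hble⟩
    have hb0 : (0:ℝ) < b := by exact_mod_cast lt_trans Int.zero_lt_one hb
    have h1 : d ≤ |x - a / b| := by
      have heq : x - a/b = (x * b - a)/b := by field_simp
      calc d ≤ |x * b - round (x * b)| / b := Finset.inf'_le _ hbmem
        _ ≤ |x * b - a| / b := div_le_div_of_nonneg_right (round_le (x * (b:ℝ)) a) hb0.le
        _ = |x - a / b| := by rw [heq, abs_div, abs_of_pos hb0]
    have h2 : |x - a / b| < (1/2:ℝ) ^ k := by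
      refine hlt.trans_le ?_
      rw [one_div_pow]
      apply one_div_le_one_div_of_le (by positivity)
      calc (2:ℝ) ^ k ≤ (b:ℝ) ^ k := by
            apply pow_le_pow_left₀ (by norm_num) (by exact_mod_cast hb)
        _ ≤ (b:ℝ) ^ (k + w) := by
            apply pow_le_pow_right₀ (by exact_mod_cast hb.le)
            omega
    exact lt_irrefl d (h1.trans_lt (h2.trans hk))
  · refine hlt.trans_le ?_
    apply one_div_le_one_div_of_le (by positivity)
    apply pow_le_pow_right₀ (by exact_mod_cast hb.le)
    omega


/-- center of covering interval -/
noncomputable def Lctr (m : ℤ) (b : ℕ) (j : ℕ) : ℝ := ((m * b - b + j : ℤ) : ℝ) / b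

/-- covering interval -/
noncomputable def LInt (m : ℤ) (w b j : ℕ) : Set ℝ :=
  Icc (Lctr m b j - 1 / (b : ℝ) ^ w) (Lctr m b j + 1 / (b : ℝ) ^ w)

lemma LInt_diam (m : ℤ) (w b j : ℕ) (hb : 0 < b) :
    EMetric.diam (LInt m w b j) = ENNReal.ofReal (2 / (b : ℝ) ^ w) := by
  rw [LInt, show (EMetric.diam : Set ℝ → ℝ≥0∞) = Metric.ediam from rfl, Real.ediam_Icc]
  congr 1
  have : (0:ℝ) < (b:ℝ) ^ w := by positivity
  ring

lemma hausdorff_liouville_Icc (δ : ℝ) (hδ : 0 < δ) (m : ℤ) :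
    μH[δ] ({x : ℝ | Liouville x} ∩ Icc (m : ℝ) (m + 1)) = 0 := by
  classical
  set w : ℕ := ⌈3 / δ⌉₊ with hw
  have hw1 : 1 ≤ w := by
    rw [hw, Nat.one_le_ceil_iff]; positivity
  have hwδ : 3 ≤ (w : ℝ) * δ := by
    rw [← div_le_iff₀ hδ]
    exact Nat.le_ceil _
  set t : ∀ n : ℕ, ((q : ℕ) × Fin (3 * (n + 1 + q) + 1)) → Set ℝ :=
    fun n i => LInt m w (n + 1 + i.1) i.2 with htdef
  set r : ℕ → ℝ≥0∞ := fun n => ENNReal.ofReal (2 / ((n:ℝ) + 1) ^ w) with hrdef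
  have hr : Tendsto r atTop (𝓝 0) := by
    rw [← ENNReal.ofReal_zero]
    apply ENNReal.tendsto_ofReal
    apply Tendsto.div_atTop (tendsto_const_nhds (x := (2:ℝ)))
    exact (tendsto_pow_atTop (by omega : w ≠ 0)).comp
      (tendsto_atTop_add_const_right atTop 1 tendsto_natCast_atTop_atTop)
  have ht : ∀ n : ℕ, ∀ i, EMetric.diam (t n i) ≤ r n := by
    intro n i
    rw [htdef, LInt_diam m w _ _ (by omega)]
    apply ENNReal.ofReal_le_ofReal
    apply div_le_div_of_nonneg_left (by norm_num) (by positivity)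
    apply pow_le_pow_left₀ (by positivity)
    push_cast; linarith [Nat.cast_nonneg (α := ℝ) i.1]
  have hst : ∀ n : ℕ, {x : ℝ | Liouville x} ∩ Icc (m : ℝ) (m + 1) ⊆ ⋃ i, t n i := by
    intro n x hxmem
    obtain ⟨hxL, hxI⟩ := hxmem
    obtain ⟨hx1, hx2⟩ := hxI
    obtain ⟨a, b, hbn, hb1, hab⟩ := liouville_large_den hxL n w
    have hb0 : (0:ℝ) < (b:ℝ) := by exact_mod_cast (by omega : (0:ℤ) < b)
    have hbw2 : (2:ℝ) ≤ (b:ℝ) ^ w := by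
      calc (2:ℝ) = 2 ^ 1 := (pow_one 2).symm
        _ ≤ (b:ℝ) ^ 1 := by rw [pow_one, pow_one]; exact_mod_cast hb1
        _ ≤ (b:ℝ) ^ w := pow_le_pow_right₀ (by exact_mod_cast hb1.le) hw1
    have he : 1/(b:ℝ)^w ≤ 1/2 := one_div_le_one_div_of_le two_pos hbw2
    have habs : |x - a/b| < 1/2 := hab.trans_le he
    rw [abs_lt] at habs
    have hub : (a:ℝ)/b < m + 2 := by linarith
    have hlb : (m:ℝ) - 1 < (a:ℝ)/b := by linarith
    have hubZ : a < (m + 2) * b := by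
      have := (div_lt_iff₀ hb0).1 hub
      exact_mod_cast this
    have hlbZ : (m - 1) * b < a := by
      have := (lt_div_iff₀ hb0).1 hlb
      exact_mod_cast this
    set q : ℕ := b.toNat - (n+1) with hq
    have hbb : ((n + 1 + q : ℕ) : ℤ) = b := by
      push_cast
      omega
    set j : ℕ := (a - (m * b - b)).toNat with hjdef
    have hj : (j:ℤ) = a - (m * b - b) := by
      rw [hjdef]
      apply Int.toNat_of_nonneg
      nlinarith
    have hjlt : j < 3 * (n + 1 + q) + 1 := by
      have h3 : (j:ℤ) < 3 * b := by nlinarith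
      omega
    refine mem_iUnion.2 ⟨⟨q, ⟨j, hjlt⟩⟩, ?_⟩
    show x ∈ LInt m w (n + 1 + q) j
    have hcast : ((m * ((n+1+q:ℕ):ℤ) - ((n+1+q:ℕ):ℤ) + (j:ℤ))) = a := by
      rw [hbb]; omega
    have hbbR : ((n + 1 + q : ℕ) : ℝ) = (b:ℝ) := by exact_mod_cast hbb
    rw [LInt, mem_Icc, Lctr, hcast, hbbR]
    rw [abs_lt] at hab
    constructor <;> linarith [hab.1, hab.2]
  have key := MeasureTheory.Measure.hausdorffMeasure_le_liminf_tsum (X := ℝ) δ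
    ({x : ℝ | Liouville x} ∩ Icc (m : ℝ) (m + 1)) r hr t
    (Eventually.of_forall ht) (Eventually.of_forall hst)
  set C : ℝ := 4 * (2:ℝ) ^ δ with hC
  have hCpos : 0 < C := by positivity
  set g : ℕ → ℝ≥0∞ := fun k => ENNReal.ofReal (C / (k:ℝ)^2) with hg
  have hSle : ∀ n : ℕ, (∑' i : (q : ℕ) × Fin (3 * (n + 1 + q) + 1), EMetric.diam (t n i) ^ δ)
      ≤ ∑' q : ℕ, g (q + (n+1)) := by
    intro n
    rw [ENNReal.tsum_sigma']
    apply ENNReal.tsum_le_tsum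
    intro q
    set bb : ℕ := n + 1 + q with hbbdef
    have hbb1 : (1:ℝ) ≤ (bb:ℝ) := by exact_mod_cast Nat.one_le_iff_ne_zero.2 (by omega)
    have hbbpos : (0:ℝ) < (bb:ℝ) := lt_of_lt_of_le one_pos hbb1
    have hdiam : ∀ j : Fin (3 * bb + 1),
        EMetric.diam (t n ⟨q, j⟩) = ENNReal.ofReal (2 / (bb:ℝ) ^ w) :=
      fun j => LInt_diam m w bb j (by omega)
    have hy : (0:ℝ) < 2 / (bb:ℝ) ^ w := by positivity
    calc ∑' j : Fin (3 * bb + 1), EMetric.diam (t n ⟨q, j⟩) ^ δ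
        = ((3 * bb + 1 : ℕ) : ℝ≥0∞) * ENNReal.ofReal (2 / (bb:ℝ) ^ w) ^ δ := by
          simp [hdiam, tsum_fintype, Finset.sum_const, nsmul_eq_mul]
      _ ≤ ENNReal.ofReal (C / (bb:ℝ) ^ 2) := by
          rw [ENNReal.ofReal_rpow_of_pos hy,
            show ((3 * bb + 1 : ℕ) : ℝ≥0∞) = ENNReal.ofReal ((3 * bb + 1 : ℕ) : ℝ) by
              rw [ENNReal.ofReal_natCast],
            ← ENNReal.ofReal_mul (by positivity)]
          apply ENNReal.ofReal_le_ofReal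
          have h1 : ((bb:ℝ)) ^ (3:ℕ) ≤ ((bb:ℝ) ^ w) ^ δ := by
            rw [← Real.rpow_natCast (bb:ℝ) w, ← Real.rpow_mul hbbpos.le,
              ← Real.rpow_natCast (bb:ℝ) 3]
            apply Real.rpow_le_rpow_of_exponent_le hbb1
            push_cast
            exact hwδ
          have h2 : (2 / (bb:ℝ) ^ w) ^ δ ≤ 2 ^ δ / (bb:ℝ) ^ (3:ℕ) := by
            rw [Real.div_rpow (by norm_num) (by positivity)]
            apply div_le_div_of_nonneg_left (by positivity) (by positivity) h1
          have h3 : ((3 * bb + 1 : ℕ) : ℝ) ≤ 4 * (bb:ℝ) := by push_cast; linarith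
          calc ((3 * bb + 1 : ℕ) : ℝ) * (2 / (bb:ℝ) ^ w) ^ δ
              ≤ (4 * (bb:ℝ)) * (2 ^ δ / (bb:ℝ) ^ (3:ℕ)) := by
                apply mul_le_mul h3 h2 (Real.rpow_nonneg hy.le δ) (by positivity)
            _ = C / (bb:ℝ) ^ 2 := by
                rw [hC]; field_simp
      _ = g (q + (n+1)) := by rw [hg, hbbdef, show n + 1 + q = q + (n+1) by omega]
  have hgsum : ∑' k, g k ≠ ∞ := by
    have hsummable : Summable (fun k : ℕ => C / (k:ℝ)^2) := by
      have h := (Real.summable_one_div_nat_pow.mpr (by norm_num : 1 < 2)).mul_left C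
      simpa [div_eq_mul_inv, one_div] using h
    rw [hg, ← ENNReal.ofReal_tsum_of_nonneg
      (fun k => div_nonneg hCpos.le (by positivity)) hsummable]
    exact ENNReal.ofReal_ne_top
  have hT : Tendsto (fun n : ℕ => ∑' q : ℕ, g (q + (n+1))) atTop (𝓝 0) :=
    (ENNReal.tendsto_sum_nat_add g hgsum).comp (tendsto_add_atTop_nat 1)
  have hS0 : Tendsto (fun n : ℕ =>
      ∑' i : (q : ℕ) × Fin (3 * (n + 1 + q) + 1), EMetric.diam (t n i) ^ δ) atTop (𝓝 0) :=
    tendsto_of_tendsto_of_tendsto_of_le_of_le tendsto_const_nhds hT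
      (fun n => zero_le) hSle
  refine le_antisymm (key.trans ?_) zero_le
  exact hS0.liminf_eq.le

theorem stmt_9 (f : ENNReal → ENNReal) (hmono : Monotone f) (hcont : Continuous f)
    (hf0 : f 0 = 0) (δ : ℝ) (hδ : 0 < δ)
    (hlim : Tendsto (fun x : ENNReal => f x / x ^ δ) (nhdsWithin 0 (Set.Ioi 0)) (nhds 0)) :
    Measure.mkMetric f {x : ℝ | Liouville x} = 0 := by
  have hL : {x : ℝ | Liouville x} ⊆ ⋃ m : ℤ, ({x : ℝ | Liouville x} ∩ Icc (m:ℝ) (m+1)) :=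
    fun x hx => mem_iUnion.2 ⟨⌊x⌋, hx, Int.floor_le x, (Int.lt_floor_add_one x).le⟩
  have hH : μH[δ] {x : ℝ | Liouville x} = 0 :=
    measure_mono_null hL (measure_iUnion_null fun m => hausdorff_liouville_Icc δ hδ m)
  have hev : f ≤ᶠ[nhdsWithin (0:ℝ≥0∞) (Set.Ici 0)] fun x => x ^ δ := by
    have h1 : ∀ᶠ x in nhdsWithin (0:ℝ≥0∞) (Set.Ioi 0), f x ≤ x ^ δ := by
      have h2 : ∀ᶠ x in nhdsWithin (0:ℝ≥0∞) (Set.Ioi 0), f x / x ^ δ < 1 :=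
        hlim.eventually (gt_mem_nhds zero_lt_one)
      have h3 : ∀ᶠ x in nhdsWithin (0:ℝ≥0∞) (Set.Ioi 0), x < 1 :=
        eventually_nhdsWithin_of_eventually_nhds (gt_mem_nhds zero_lt_one)
      have h4 : ∀ᶠ x in nhdsWithin (0:ℝ≥0∞) (Set.Ioi 0), x ∈ Set.Ioi (0:ℝ≥0∞) :=
        eventually_mem_nhdsWithin
      filter_upwards [h2, h3, h4] with x hx2 hx3 hx4
      have hx0 : x ≠ 0 := ne_of_gt hx4
      have hxd0 : x ^ δ ≠ 0 := by
        simp [ENNReal.rpow_eq_zero_iff, hx0, hδ, not_lt.2 hδ.le]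
      have hxdt : x ^ δ ≠ ∞ := by
        refine ne_of_lt (lt_of_le_of_lt (ENNReal.rpow_le_one hx3.le hδ.le) ?_)
        exact ENNReal.one_lt_top
      have := (ENNReal.div_lt_iff (Or.inl hxd0) (Or.inl hxdt)).1 hx2
      rw [one_mul] at this
      exact this.le
    have : Set.Ici (0:ℝ≥0∞) = {0} ∪ Set.Ioi 0 := by
      ext x; simp [eq_comm, pos_iff_ne_zero, or_comm]
    rw [EventuallyLE, this, nhdsWithin_union, eventually_sup]
    refine ⟨?_, h1⟩
    rw [nhdsWithin_singleton, eventually_pure]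
    exact le_trans (le_of_eq hf0) zero_le
  have hle : (Measure.mkMetric f : Measure ℝ) ≤ μH[δ] :=
    Measure.mkMetric_mono (by rwa [show Set.Ici (0:ℝ≥0∞) = Set.univ from Set.eq_univ_of_forall fun x => Set.mem_Ici.2 zero_le, nhdsWithin_univ] at hev)
  exact le_antisymm (le_trans (hle _) hH.le) zero_le
end
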